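/- arXiv:2508.03384 — 5 statements merged into one kernel-verified Lean document; each statement's English description precedes it below -/
import Mathlib

section
/- Assume Dickson's conjecture: for every integer k ≥ 1, every sequence of integers a_1, …, a_k and every sequence of positive integers b_1, …, b_k, if there is no integer m > 1 dividing the product ∏_{i=1}^{k} (a_i + n b_i) for all positive integers n, then there exist infinitely many positive integers n such that a_1 + b_1 n, …, a_k + b_k n are all prime. Then for every positive integer l there are infinitely many Cunningham chains of length l, i.e., infinitely many primes q such that all of the numbers q_1 = q, q_2 = 2q_1 + 1, …, q_l = 2q_{l−1} + 1 are prime. -/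
/-- **Dickson's conjecture implies that for every `l ≥ 1` there are infinitely many
Cunningham chains of length `l`.**
Dickson's conjecture: for every `k ≥ 1`, integers `a₁, …, a_k` and positive integers
`b₁, …, b_k`, if no integer `m > 1` divides `∏ i, (aᵢ + n bᵢ)` for all positive
integers `n`, then there are infinitely many positive integers `n` such that all of
`a₁ + b₁ n, …, a_k + b_k n` are prime.  Conclusion: for every `l ≥ 1`, there are
infinitely many primes `q` such that `q₁ = q, q₂ = 2q₁ + 1, …, q_l = 2q_{l-1} + 1`
are all prime; here `q_{i+1} = 2^i * q + (2^i - 1)` for `0 ≤ i < l`. -/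
theorem dickson_implies_infinitely_many_cunningham_chains
    (dickson : ∀ k : ℕ, 1 ≤ k → ∀ a b : Fin k → ℤ, (∀ i, 1 ≤ b i) →
      (¬ ∃ m : ℤ, 1 < m ∧ ∀ n : ℕ, 0 < n → m ∣ ∏ i, (a i + (n : ℤ) * b i)) →
      {n : ℕ | 0 < n ∧ ∀ i, Prime (a i + (n : ℤ) * b i)}.Infinite) :
    ∀ l : ℕ, 1 ≤ l →
      {q : ℕ | ∀ i, i < l → Nat.Prime (2 ^ i * q + (2 ^ i - 1))}.Infinite := by
  intro l hl
  set a : Fin l → ℤ := fun i => 2 ^ (i : ℕ) - 1 with ha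
  set b : Fin l → ℤ := fun i => 2 ^ (i : ℕ) with hb
  have hbpos : ∀ i, 1 ≤ b i := fun i => one_le_pow₀ (by norm_num)
  have hno : ¬ ∃ m : ℤ, 1 < m ∧ ∀ n : ℕ, 0 < n → m ∣ ∏ i, (a i + (n : ℤ) * b i) := by
    rintro ⟨m, hm, hdvd⟩
    set p := m.natAbs.minFac with hp
    have hm2 : 2 ≤ m.natAbs := by
      have : 1 < m.natAbs := by
        rw [Int.lt_iff_add_one_le] at hm
        omega
      omega
    have hpprime : p.Prime := Nat.minFac_prime (by omega)
    have hpdvd : (p : ℤ) ∣ m :=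
      (Int.natCast_dvd_natCast.mpr (Nat.minFac_dvd _)).trans (Int.natAbs_dvd.mpr dvd_rfl)
    have hp2 : 2 ≤ p := hpprime.two_le
    have hn : 0 < p - 1 := by omega
    have hd : (p : ℤ) ∣ ∏ i, (a i + ((p - 1 : ℕ) : ℤ) * b i) :=
      hpdvd.trans (hdvd (p - 1) hn)
    have heq : ∀ i : Fin l, a i + ((p - 1 : ℕ) : ℤ) * b i = (p : ℤ) * 2 ^ (i : ℕ) - 1 := by
      intro i
      have : ((p - 1 : ℕ) : ℤ) = (p : ℤ) - 1 := by
        push_cast [Nat.cast_sub (by omega : 1 ≤ p)]; ring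
      simp only [ha, hb, this]; ring
    rw [Finset.prod_congr rfl (fun i _ => heq i)] at hd
    have hpint : Prime (p : ℤ) := Nat.prime_iff_prime_int.mp hpprime
    obtain ⟨i, -, hi⟩ := hpint.exists_mem_finset_dvd hd
    have : (p : ℤ) ∣ 1 := by
      have h1 : (p : ℤ) ∣ (p : ℤ) * 2 ^ (i : ℕ) := Dvd.intro _ rfl
      have := dvd_sub h1 hi
      simpa using this
    exact hpint.not_dvd_one this
  have hinf := dickson l hl a b hbpos hno
  apply hinf.mono
  rintro q ⟨-, hq⟩ i hi
  have hqi := hq ⟨i, hi⟩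
  have hcast : ((2 ^ i * q + (2 ^ i - 1) : ℕ) : ℤ) = a ⟨i, hi⟩ + (q : ℤ) * b ⟨i, hi⟩ := by
    have h1 : 1 ≤ 2 ^ i := Nat.one_le_two_pow
    push_cast [Nat.cast_sub h1]
    simp only [ha, hb]
    ring
  rw [Nat.prime_iff_prime_int, hcast]
  exact hqi
end

section
/- Let N be an abelian group such that Aut(N) is also abelian, and let A and A' be subgroups of Aut(N). Let M = N ⋊ A and M' = N ⋊ A' be the corresponding subgroups of Hol(N) (consisting of all elements [η, α] with η ∈ N and α ∈ A, respectively α ∈ A'). If there exists a group isomorphism φ: M → M' with φ(N) = N, then M = M'. -/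
/-!
Conjugation by `[η, α] ∈ Hol(N)` acts on the normal copy of `N` as `α` (here `N` abelian is
used). An isomorphism `φ : M ≃* M'` carrying `N` onto `N` restricts to some `ψ ∈ Aut(N)`, and
applying `φ` to `x n x⁻¹` gives `ψ α = β ψ` where `α`, `β` are the `Aut(N)`-components of `x` and
`φ x`. As `Aut(N)` is abelian, `α = β`, so `φ` preserves the `Aut(N)`-component and `M ≤ M'`;
the same argument for `φ⁻¹` gives the reverse inclusion.
-/

open SemidirectProduct

abbrev Hol (N : Type*) [Group N] : Type _ :=
  N ⋊[MonoidHom.id (MulAut N)] MulAut N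

namespace SemidirectProduct

section BaseEquiv

variable {N G : Type*} [Group N] [Group G] {φ : G →* MulAut N} {M M' : Subgroup (N ⋊[φ] G)}

noncomputable def inlEquivKerSubgroupOf (hM : rightHom.ker ≤ M) :
    N ≃* rightHom.ker.subgroupOf M :=
  (MonoidHom.ofInjective inl_injective).trans <|
    (MulEquiv.subgroupCongr range_inl_eq_ker_rightHom).trans (Subgroup.subgroupOfEquivOfLe hM).symm

@[simp]
theorem coe_inlEquivKerSubgroupOf (hM : rightHom.ker ≤ M) (n : N) :
    ((inlEquivKerSubgroupOf hM n : M) : N ⋊[φ] G) = inl n :=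
  rfl

variable (hM : rightHom.ker ≤ M) (hM' : rightHom.ker ≤ M') (e : M ≃* M')
  (he : (rightHom.ker.subgroupOf M).map e.toMonoidHom = rightHom.ker.subgroupOf M')

noncomputable def baseEquiv : N ≃* N :=
  (inlEquivKerSubgroupOf hM).trans <|
    ((e.subgroupMap _).trans (MulEquiv.subgroupCongr he)).trans (inlEquivKerSubgroupOf hM').symm

theorem coe_apply_eq_inl_baseEquiv {y : M} {n : N} (hy : (y : N ⋊[φ] G) = inl n) :
    (e y : N ⋊[φ] G) = inl (baseEquiv hM hM' e he n) := by
  obtain rfl : y = inlEquivKerSubgroupOf hM n := Subtype.ext hy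
  rw [← coe_inlEquivKerSubgroupOf hM', baseEquiv]
  simp only [MulEquiv.trans_apply, MulEquiv.apply_symm_apply]
  rfl

end BaseEquiv

section Conj

variable {N G : Type*} [CommGroup N] [Group G] {φ : G →* MulAut N}

theorem mul_inl_mul_inv (x : N ⋊[φ] G) (n : N) : x * inl n * x⁻¹ = inl (φ x.right n) := by
  ext <;> simp [mul_comm]

variable {M M' : Subgroup (N ⋊[φ] G)} (hM : rightHom.ker ≤ M) (hM' : rightHom.ker ≤ M')
  (e : M ≃* M') (he : (rightHom.ker.subgroupOf M).map e.toMonoidHom = rightHom.ker.subgroupOf M')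

theorem baseEquiv_apply_map_right (x : M) (n : N) :
    baseEquiv hM hM' e he (φ (x : N ⋊[φ] G).right n) =
      φ (e x : N ⋊[φ] G).right (baseEquiv hM hM' e he n) := by
  have hn : inl n ∈ M := hM (rightHom_inl n)
  apply inl_injective (φ := φ)
  rw [← coe_apply_eq_inl_baseEquiv hM hM' e he (y := x * ⟨inl n, hn⟩ * x⁻¹) (mul_inl_mul_inv _ _),
    ← mul_inl_mul_inv, ← coe_apply_eq_inl_baseEquiv hM hM' e he (y := ⟨inl n, hn⟩) rfl]
  simp only [map_mul, map_inv, Subgroup.coe_mul, Subgroup.coe_inv]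

end Conj

end SemidirectProduct

namespace Hol

variable {N : Type*} [CommGroup N] (hAutAb : ∀ a b : MulAut N, a * b = b * a)
  {M M' : Subgroup (Hol N)} (hM : rightHom.ker ≤ M) (hM' : rightHom.ker ≤ M') (e : M ≃* M')
  (he : (rightHom.ker.subgroupOf M).map e.toMonoidHom = rightHom.ker.subgroupOf M')

include hAutAb hM hM' he

theorem right_mulEquiv_apply (x : M) : (e x : Hol N).right = (x : Hol N).right := by
  have hcomm : baseEquiv hM hM' e he * (x : Hol N).right =
      (e x : Hol N).right * baseEquiv hM hM' e he :=
    MulEquiv.ext (baseEquiv_apply_map_right hM hM' e he x)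
  rw [hAutAb] at hcomm
  exact (mul_right_cancel hcomm).symm

theorem le_of_mulEquiv_map_ker_eq : M ≤ M' := by
  intro x hx
  rw [← Subgroup.comap_map_eq_self hM']
  exact ⟨e ⟨x, hx⟩, (e ⟨x, hx⟩).2, right_mulEquiv_apply hAutAb hM hM' e he ⟨x, hx⟩⟩

end Hol

/-- Let `N` be an abelian group such that `Aut(N)` is also abelian, and let `A, A'` be
subgroups of `Aut(N)`.  Let `M = N ⋊ A` and `M' = N ⋊ A'` be the corresponding subgroups
of `Hol(N)` (the preimages of `A`, resp. `A'`, under the projection `Hol(N) → Aut(N)`;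
the copy of `N` in `Hol(N)` is the kernel of this projection).  If there is a group
isomorphism `φ : M → M'` with `φ(N) = N`, then `M = M'`. -/
theorem semidirect_eq_of_mulEquiv_fixing_base {N : Type*} [CommGroup N]
    (hAutAb : ∀ a b : MulAut N, a * b = b * a)
    (A A' : Subgroup (MulAut N)) (M M' : Subgroup (Hol N))
    (hM : M = A.comap (SemidirectProduct.rightHom : Hol N →* MulAut N))
    (hM' : M' = A'.comap (SemidirectProduct.rightHom : Hol N →* MulAut N))
    (φ : M ≃* M')
    (hφ : Subgroup.map φ.toMonoidHom
        (((SemidirectProduct.rightHom : Hol N →* MulAut N).ker).comap M.subtype) =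
      ((SemidirectProduct.rightHom : Hol N →* MulAut N).ker).comap M'.subtype) :
    M = M' := by
  have hN : rightHom.ker ≤ M := hM ▸ MonoidHom.ker_le_comap _ _
  have hN' : rightHom.ker ≤ M' := hM' ▸ MonoidHom.ker_le_comap _ _
  exact le_antisymm (Hol.le_of_mulEquiv_map_ker_eq hAutAb hN hN' φ hφ)
    (Hol.le_of_mulEquiv_map_ker_eq hAutAb hN' hN φ.symm ((Subgroup.map_symm_eq_iff_map_eq _).2 hφ))
end

section
/- Let l ≥ 1 and x ≥ 1 be integers. Then the number of subgroups of the abelian group (C_2)^{l−1} × C_{2^x} (the direct product of l−1 copies of the cyclic group of order 2 with a cyclic group of order 2^x) equals Σ_l := Σ_{k=0}^{l−1} (2^{l−(k+1)} x + 1) ∏_{i=1}^{k} (2^{l−i} − 1)/(2^i − 1), where the empty product (k = 0) equals 1. -/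
/-!
As `G` is abelian, a subgroup `K ≤ G × H` is the same as a triple: a subgroup `A ≤ G`
(the elements `(g, 1)` of `K`), a subgroup `B ≤ H` (the projection of `K`) and a homomorphism
`φ : B → G ⧸ A`, and then `|K| = |A| |B|` (Goursat). If `H` is cyclic of order `2 ^ x`, it has one
subgroup of each order `2 ^ j`, and if `G` has exponent `2`, there are `|G ⧸ A|` homomorphisms from
such a subgroup to `G ⧸ A` when `j ≥ 1`. This turns any sum `∑_{K ≤ G × H} f |K|` into a sum over
the subgroups of `G`. With `G = C₂ⁿ` and `H = C₂` it gives a recursion in `n`, solved by the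
Gaussian binomial coefficients at `q = 2`: `C₂ⁿ` has `[n, k]₂` subgroups of order `2 ^ k`. With
`H = C_{2^x}` and `f = 1` it counts the subgroups of `C₂ⁿ × C_{2^x}`.
-/

open Finset

instance MonoidHom.finite {M N : Type*} [MulOneClass M] [MulOneClass N] [Finite M] [Finite N] :
    Finite (M →* N) :=
  FunLike.finite _

noncomputable local instance {G : Type*} [Group G] [Finite G] : Fintype (Subgroup G) :=
  .ofFinite _

noncomputable local instance {M N : Type*} [MulOneClass M] [MulOneClass N] [Finite M] [Finite N] :
    Fintype (M →* N) :=
  .ofFinite _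

namespace Subgroup

lemma sum_subgroups_congr {G H M : Type*} [Group G] [Group H] [Finite G] [Finite H]
    [AddCommMonoid M] (e : G ≃* H) (f : ℕ → M) :
    ∑ K : Subgroup G, f (Nat.card K) = ∑ K : Subgroup H, f (Nat.card K) :=
  Fintype.sum_equiv e.mapSubgroup.toEquiv _ _ fun _ ↦
    congrArg f (card_map_of_injective (f := e.toMonoidHom) e.injective).symm

lemma card_quotient_eq_div {G : Type*} [Group G] [Finite G] (A : Subgroup G) :
    (Nat.card (G ⧸ A) : ℚ) = Nat.card G / Nat.card A := by
  rw [eq_div_iff (Nat.cast_ne_zero.2 Nat.card_pos.ne'), ← Nat.cast_mul, mul_comm, ← index,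
    card_mul_index]

section Goursat

variable {G H : Type*} [CommGroup G] [Group H] (A : Subgroup G) (B : Subgroup H) (φ : B →* G ⧸ A)

def goursatHom : G × B →* G ⧸ A :=
  (QuotientGroup.mk' A).comp (MonoidHom.fst G B) * (φ.comp (MonoidHom.snd G B))⁻¹

def goursatSubgroup : Subgroup (G × H) :=
  (goursatHom A B φ).ker.map ((MonoidHom.id G).prodMap B.subtype)

variable {A B φ}

lemma mem_goursatSubgroup {g : G} {h : H} :
    (g, h) ∈ goursatSubgroup A B φ ↔ ∃ hh : h ∈ B, (g : G ⧸ A) = φ ⟨h, hh⟩ := by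
  simp [goursatSubgroup, goursatHom, mul_inv_eq_one]

lemma goursatHom_surjective : Function.Surjective (goursatHom A B φ) :=
  fun q ↦ QuotientGroup.induction_on q fun g ↦ ⟨(g, 1), by simp [goursatHom]⟩

lemma card_goursatSubgroup [Finite G] [Finite H] :
    Nat.card (goursatSubgroup A B φ) = Nat.card A * Nat.card B := by
  have hinj : Function.Injective ((MonoidHom.id G).prodMap B.subtype) :=
    Function.Injective.prodMap (fun _ _ ↦ id) B.subtype_injective
  have hker : Nat.card (goursatHom A B φ).ker * A.index = Nat.card A * A.index * Nat.card B := by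
    rw [card_mul_index A, ← Nat.card_prod, ← card_mul_index (goursatHom A B φ).ker, index_ker,
      MonoidHom.range_eq_top.2 goursatHom_surjective, card_top, index]
  rw [goursatSubgroup, card_map_of_injective hinj]
  exact Nat.eq_of_mul_eq_mul_right (Nat.pos_of_ne_zero index_ne_zero_of_finite)
    (by rw [hker]; ring)

lemma mk_one_mem_goursatSubgroup_iff {g : G} :
    (g, (1 : H)) ∈ goursatSubgroup A B φ ↔ g ∈ A := by
  rw [mem_goursatSubgroup, ← QuotientGroup.eq_one_iff (N := A) g]
  exact ⟨fun ⟨_, hg⟩ ↦ hg.trans (map_one φ), fun hg ↦ ⟨B.one_mem, hg.trans (map_one φ).symm⟩⟩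

lemma exists_mem_goursatSubgroup_iff {h : H} :
    (∃ g, (g, h) ∈ goursatSubgroup A B φ) ↔ h ∈ B := by
  simp only [mem_goursatSubgroup]
  exact ⟨fun ⟨_, hh, _⟩ ↦ hh, fun hh ↦ ⟨(φ ⟨h, hh⟩).out, hh, QuotientGroup.out_eq' _⟩⟩

variable (G H) in
abbrev GoursatData := Σ A : Subgroup G, Σ B : Subgroup H, B →* G ⧸ A

lemma goursatSubgroup_injective :
    Function.Injective fun t : GoursatData G H ↦ goursatSubgroup t.1 t.2.1 t.2.2 := by
  rintro ⟨A, B, φ⟩ ⟨A', B', φ'⟩ hK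
  simp only at hK
  obtain rfl : A = A' := by
    ext g
    rw [← mk_one_mem_goursatSubgroup_iff (B := B) (φ := φ), hK, mk_one_mem_goursatSubgroup_iff]
  obtain rfl : B = B' := by
    ext h
    rw [← exists_mem_goursatSubgroup_iff (φ := φ), hK, exists_mem_goursatSubgroup_iff]
  obtain rfl : φ = φ' := by
    ext b
    have hb : ((φ b).out, (b : H)) ∈ goursatSubgroup A B φ' :=
      hK ▸ mem_goursatSubgroup.2 ⟨b.2, QuotientGroup.out_eq' _⟩
    obtain ⟨_, hφ'⟩ := mem_goursatSubgroup.1 hb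
    rwa [QuotientGroup.out_eq'] at hφ'
  rfl

lemma goursatSubgroup_surjective :
    Function.Surjective fun t : GoursatData G H ↦ goursatSubgroup t.1 t.2.1 t.2.2 := by
  intro K
  let p : K →* K.map (MonoidHom.snd G H) := (MonoidHom.snd G H).subgroupMap K
  let q : K →* G ⧸ K.comap (MonoidHom.inl G H) :=
    (QuotientGroup.mk' _).comp ((MonoidHom.fst G H).comp K.subtype)
  have hpq : p.ker ≤ q.ker := by
    rintro ⟨⟨g, h⟩, hK⟩ hp
    obtain rfl : h = 1 := congrArg Subtype.val hp
    simpa [q, QuotientGroup.eq_one_iff] using hK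
  let φ := p.liftOfSurjective ((MonoidHom.snd G H).subgroupMap_surjective K) ⟨q, hpq⟩
  have hφ (k : K) : φ (p k) = q k := MonoidHom.liftOfRightInverse_comp_apply _ _ _ _ _
  refine ⟨⟨_, _, φ⟩, ?_⟩
  ext ⟨g, h⟩
  simp only [mem_goursatSubgroup]
  constructor
  · rintro ⟨⟨⟨g₀, h⟩, hK₀, rfl⟩, hg⟩
    have hg₀ : (g₀ : G ⧸ K.comap (MonoidHom.inl G H)) = g := hg ▸ hφ ⟨(g₀, h), hK₀⟩ |>.symm
    have hA : ((g₀⁻¹ * g, 1) : G × H) ∈ K := QuotientGroup.eq.1 hg₀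
    simpa using K.mul_mem hK₀ hA
  · intro hK
    exact ⟨⟨(g, h), hK, rfl⟩, (hφ ⟨(g, h), hK⟩).symm⟩

noncomputable def goursatEquiv : GoursatData G H ≃ Subgroup (G × H) :=
  .ofBijective _ ⟨goursatSubgroup_injective, goursatSubgroup_surjective⟩

lemma sum_subgroups_prod [Finite G] [Finite H] {M : Type*} [AddCommMonoid M] (f : ℕ → M) :
    ∑ K : Subgroup (G × H), f (Nat.card K) =
      ∑ A : Subgroup G, ∑ B : Subgroup H, Nat.card (B →* G ⧸ A) • f (Nat.card A * Nat.card B) := by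
  rw [← Fintype.sum_equiv goursatEquiv (fun t ↦ f (Nat.card (goursatSubgroup t.1 t.2.1 t.2.2)))
    _ fun _ ↦ rfl]
  simp [Fintype.sum_sigma, card_goursatSubgroup]

end Goursat

end Subgroup

open Subgroup

namespace IsCyclic

lemma card_monoidHom {G W : Type*} [Group G] [IsCyclic G] [Group W] :
    Nat.card (G →* W) = Nat.card {w : W // w ^ Nat.card G = 1} := by
  obtain ⟨g, hg⟩ := IsCyclic.exists_generator (α := G)
  rw [← orderOf_eq_card_of_forall_mem_zpowers hg]
  exact Nat.card_congr
    { toFun f := ⟨f g, by rw [← map_pow, pow_orderOf_eq_one, map_one]⟩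
      invFun w := monoidHomOfForallMemZpowers hg (orderOf_dvd_of_pow_eq_one w.2)
      left_inv f := (MonoidHom.eq_iff_eq_on_generator hg _ f).2
        (monoidHomOfForallMemZpowers_apply_gen hg _)
      right_inv w := Subtype.ext (monoidHomOfForallMemZpowers_apply_gen hg _) }

variable {G : Type*} [CommGroup G] [IsCyclic G] [Finite G]

lemma eq_ker_powMonoidHom_card (B : Subgroup G) :
    B = (powMonoidHom (Nat.card B) : G →* G).ker := by
  refine eq_of_le_of_card_ge (fun b hb ↦ ?_) ?_
  · exact congrArg Subtype.val (pow_card_eq_one' (x := (⟨b, hb⟩ : B)))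
  · rw [card_powMonoidHom_ker, Nat.gcd_eq_right (card_subgroup_dvd_card B)]

lemma sum_subgroups {M : Type*} [AddCommMonoid M] (f : ℕ → M) :
    ∑ B : Subgroup G, f (Nat.card B) = ∑ d ∈ (Nat.card G).divisors, f d := by
  refine sum_nbij (fun B ↦ Nat.card B) (fun B _ ↦ ?_) (fun B _ B' _ h ↦ ?_)
    (fun d hd ↦ ?_) fun _ _ ↦ rfl
  · exact Nat.mem_divisors.2 ⟨card_subgroup_dvd_card B, Nat.card_pos.ne'⟩
  · rw [eq_ker_powMonoidHom_card B, eq_ker_powMonoidHom_card B',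
      show Nat.card B = Nat.card B' from h]
  · refine ⟨(powMonoidHom d : G →* G).ker, mem_coe.2 (mem_univ _), ?_⟩
    simp only [card_powMonoidHom_ker, Nat.gcd_eq_right (Nat.dvd_of_mem_divisors hd)]

end IsCyclic

lemma sum_subgroups_prod_of_card_eq_two_pow {G H M : Type*} [CommGroup G] [Finite G]
    (hG : Monoid.exponent G ∣ 2) [CommGroup H] [IsCyclic H] [Finite H] {x : ℕ}
    (hH : Nat.card H = 2 ^ x) [AddCommMonoid M] (f : ℕ → M) :
    ∑ K : Subgroup (G × H), f (Nat.card K) = ∑ A : Subgroup G,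
      (f (Nat.card A) + Nat.card (G ⧸ A) • ∑ j ∈ range x, f (Nat.card A * 2 ^ (j + 1))) := by
  rw [sum_subgroups_prod]
  refine sum_congr rfl fun A _ ↦ ?_
  simp only [IsCyclic.card_monoidHom]
  rw [IsCyclic.sum_subgroups (fun d ↦ Nat.card {w : G ⧸ A // w ^ d = 1} • f (Nat.card A * d)),
    hH, Nat.divisors_prime_pow Nat.prime_two, sum_map, sum_range_succ', smul_sum]
  have hexp (j : ℕ) : Monoid.exponent (G ⧸ A) ∣ 2 ^ (j + 1) :=
    (Group.exponent_quotient_dvd A).trans (hG.trans (dvd_pow_self 2 j.succ_ne_zero))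
  simp [Monoid.exponent_dvd_iff_forall_pow_eq_one.1 (hexp _), add_comm]

/-- The Gaussian binomial coefficient `[n, k]_q` at `q = 2`. -/
def gaussBinom (n k : ℕ) : ℚ := ∏ i ∈ range k, (2 ^ (n - i) - 1) / (2 ^ (i + 1) - 1)

@[simp] lemma gaussBinom_zero_right (n : ℕ) : gaussBinom n 0 = 1 := prod_range_zero _

lemma gaussBinom_self_succ (n : ℕ) : gaussBinom n (n + 1) = 0 :=
  prod_eq_zero (self_mem_range_succ n) (by simp)

lemma gaussBinom_succ_succ {n k : ℕ} (hk : k ≤ n) :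
    gaussBinom (n + 1) (k + 1) = gaussBinom n (k + 1) + 2 ^ (n - k) * gaussBinom n k := by
  simp only [gaussBinom, prod_div_distrib]
  rw [prod_range_succ' (fun i ↦ (2 : ℚ) ^ (n + 1 - i) - 1),
    prod_range_succ (fun i ↦ (2 : ℚ) ^ (n - i) - 1),
    prod_range_succ (fun i ↦ (2 : ℚ) ^ (i + 1) - 1)]
  simp only [Nat.add_sub_add_right, Nat.sub_zero]
  have hden : (2 : ℚ) ^ (k + 1) - 1 ≠ 0 := sub_ne_zero.2 (one_lt_pow₀ one_lt_two k.succ_ne_zero).ne'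
  have hpow : (2 : ℚ) ^ (n + 1) = 2 ^ (n - k) * 2 ^ (k + 1) := by rw [← pow_add]; congr 1; omega
  field_simp
  rw [hpow]
  ring

def piFinSuccMulEquiv (M : Type*) [Mul M] (n : ℕ) : (Fin (n + 1) → M) ≃* (Fin n → M) × M :=
  { (Fin.consEquiv fun _ ↦ M).symm.trans (Equiv.prodComm _ _) with map_mul' := fun _ _ ↦ rfl }

section ElementaryAbelian

local notation "C₂" => Multiplicative (ZMod 2)

lemma exponent_pi_zmod_two_dvd (n : ℕ) : Monoid.exponent (Fin n → C₂) ∣ 2 :=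
  Monoid.exponent_dvd_iff_forall_pow_eq_one.2 fun w ↦ funext fun i ↦ by
    simpa using pow_card_eq_one' (x := w i)

lemma sum_subgroups_pi_zmod_two_succ (n : ℕ) (f : ℕ → ℚ) :
    ∑ A : Subgroup (Fin (n + 1) → C₂), f (Nat.card A) =
      ∑ A : Subgroup (Fin n → C₂), (f (Nat.card A) + 2 ^ n / Nat.card A * f (Nat.card A * 2)) := by
  rw [sum_subgroups_congr (piFinSuccMulEquiv C₂ n),
    sum_subgroups_prod_of_card_eq_two_pow (exponent_pi_zmod_two_dvd n) (x := 1) (by simp)]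
  simp [card_quotient_eq_div]

lemma sum_subgroups_pi_zmod_two (n : ℕ) (f : ℕ → ℚ) :
    ∑ A : Subgroup (Fin n → C₂), f (Nat.card A) =
      ∑ k ∈ range (n + 1), gaussBinom n k * f (2 ^ k) := by
  induction n generalizing f with
  | zero => simp
  | succ n ih =>
    have hstep : ∀ k ∈ range (n + 1),
        gaussBinom n k * (f (2 ^ k) + 2 ^ n / ((2 ^ k : ℕ) : ℚ) * f (2 ^ k * 2)) =
          gaussBinom n k * f (2 ^ k) + 2 ^ (n - k) * gaussBinom n k * f (2 ^ (k + 1)) := by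
      intro k hk
      rw [Nat.cast_pow, Nat.cast_ofNat, div_eq_mul_inv,
        ← pow_sub₀ (2 : ℚ) two_ne_zero (Nat.le_of_lt_succ (mem_range.1 hk)), ← pow_succ]
      ring
    have hpascal : ∀ k ∈ range (n + 1),
        gaussBinom (n + 1) (k + 1) * f (2 ^ (k + 1)) =
          gaussBinom n (k + 1) * f (2 ^ (k + 1)) + 2 ^ (n - k) * gaussBinom n k * f (2 ^ (k + 1)) := by
      intro k hk
      rw [gaussBinom_succ_succ (Nat.le_of_lt_succ (mem_range.1 hk))]
      ring
    rw [sum_subgroups_pi_zmod_two_succ, ih fun m ↦ f m + 2 ^ n / m * f (m * 2),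
      sum_congr rfl hstep, sum_add_distrib, sum_range_succ' _ (n + 1), sum_congr rfl hpascal,
      sum_add_distrib, sum_range_succ' (fun k ↦ gaussBinom n k * f (2 ^ k)) n,
      sum_range_succ (fun k ↦ gaussBinom n (k + 1) * f (2 ^ (k + 1))) n, gaussBinom_self_succ]
    simp only [gaussBinom_zero_right]
    ring

end ElementaryAbelian

theorem card_subgroups_elementary_abelian_times_cyclic_general
    (l x : ℕ) (hl : 1 ≤ l) :
    (Nat.card (Subgroup
        ((Fin (l - 1) → Multiplicative (ZMod 2)) × Multiplicative (ZMod (2 ^ x)))) : ℚ) =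
      ∑ k ∈ Finset.range l, ((2 ^ (l - (k + 1)) * (x : ℚ) + 1) *
        ∏ i ∈ Finset.range k, ((2 ^ (l - (i + 1)) - 1 : ℚ) / (2 ^ (i + 1) - 1))) := by
  obtain ⟨n, rfl⟩ : ∃ n, l = n + 1 := ⟨l - 1, by omega⟩
  have hcount := sum_subgroups_prod_of_card_eq_two_pow (exponent_pi_zmod_two_dvd n)
    (H := Multiplicative (ZMod (2 ^ x))) (x := x) (by simp) fun _ ↦ (1 : ℚ)
  have hV : Nat.card (Fin n → Multiplicative (ZMod 2)) = 2 ^ n := by simp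
  simp only [sum_const, card_range, card_univ, Fintype.card_eq_nat_card, nsmul_eq_mul, mul_one,
    card_quotient_eq_div, hV, Nat.cast_pow, Nat.cast_ofNat] at hcount
  rw [Nat.add_sub_cancel, hcount, sum_subgroups_pi_zmod_two n fun m ↦ 1 + 2 ^ n / m * x]
  refine sum_congr rfl fun k hk ↦ ?_
  rw [gaussBinom, Nat.cast_pow, Nat.cast_ofNat, div_eq_mul_inv,
    ← pow_sub₀ (2 : ℚ) two_ne_zero (Nat.le_of_lt_succ (mem_range.1 hk))]
  simp only [Nat.add_sub_add_right]
  ring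

/-- Let `l ≥ 1` and `x ≥ 1`.  The number of subgroups of the abelian group
`(C₂)^{l-1} × C_{2^x}` equals
`Σ_l := Σ_{k=0}^{l-1} (2^{l-(k+1)} x + 1) ∏_{i=1}^{k} (2^{l-i} - 1)/(2^i - 1)`,
the empty product (`k = 0`) being `1`.  The products are taken in `ℚ`, reindexed by
`i ↦ i + 1`. -/
theorem card_subgroups_elementary_abelian_times_cyclic
    (l x : ℕ) (hl : 1 ≤ l) (hx : 1 ≤ x) :
    (Nat.card (Subgroup
        ((Fin (l - 1) → Multiplicative (ZMod 2)) × Multiplicative (ZMod (2 ^ x)))) : ℚ) =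
      ∑ k ∈ Finset.range l, ((2 ^ (l - (k + 1)) * (x : ℚ) + 1) *
        ∏ i ∈ Finset.range k, ((2 ^ (l - (i + 1)) - 1 : ℚ) / (2 ^ (i + 1) - 1))) :=
  card_subgroups_elementary_abelian_times_cyclic_general l x hl
end

section
/- Let n = p_1 ⋯ p_l be a Cunningham product, let N = C_n be the cyclic group of order n, let π be the set of primes dividing n, and let H be the unique Hall π-subgroup of Hol(N). If M ≤ Hol(N) is a subgroup whose induced action on N is transitive, then the action of M ∩ H on N is also transitive. -/
/-- The natural action of the holomorph on `N`: `[η, α] · x = η α(x)`. -/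
def holSmul {N : Type*} [Group N] (g : Hol N) (x : N) : N :=
  g.left * g.right x

/-- `H` is a Hall `π`-subgroup of `G`: its order is a product of primes in `π` and its
index is divisible by no prime in `π`. -/
def IsHallPiSubgroup {G : Type*} [Group G] (π : Set ℕ) (H : Subgroup G) : Prop :=
  (∀ q : ℕ, q.Prime → q ∣ Nat.card H → q ∈ π) ∧ ∀ q ∈ π, ¬ q ∣ H.index

/-!
Let `p` be the largest prime factor of the squarefree `n = p * m`. Each prime `q ∣ n` has
`q - 1 < p`, so `p` does not divide `|Aut C_n| = φ(n)`. Hence an element of order `p` of the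
transitive group `M` (which exists by Cauchy, as `n ∣ |M|`) is a translation, and `M` contains
the subgroup of order `p` of `C_n`, the kernel of the reduction `C_n → C_m`. The image of `M` in
`Hol(C_m)` is transitive, so by induction a `π`-element of it maps `a mod m` to `b mod m`. A
suitable power of a preimage in `M` is a `π`-element with the same image, and composing it with
a translation from the kernel gives an element of `M ⊓ H` mapping `a` to `b`. Finally, as
`Aut C_n ≅ (ZMod n)ˣ` is abelian, the elements of `Hol(C_n)` whose automorphism part has
`π`-order form a `π`-subgroup containing every Hall `π`-subgroup, hence equal to `H`.
-/

open SemidirectProduct Multiplicative MulAction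

theorem Nat.coprime_div_gcd_pow_self {a : ℕ} (ha : a ≠ 0) (b : ℕ) :
    (a / a.gcd (b ^ a)).Coprime b := by
  set s := a.gcd (b ^ a)
  have hs : 0 < s := Nat.gcd_pos_of_pos_left _ (Nat.pos_of_ne_zero ha)
  refine Nat.coprime_of_dvd fun q hq hqa hqb => ?_
  -- `q ∤ b ^ a / s`, so all of `q ^ a ∣ b ^ a` lies in `s ∣ a`, although `a < q ^ a`.
  have hq' : ¬ q ∣ b ^ a / s := fun h =>
    hq.one_lt.ne' (Nat.eq_one_of_dvd_coprimes (Nat.coprime_div_gcd_div_gcd hs) hqa h)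
  have hqs : q ^ a ∣ s := by
    refine (Nat.Coprime.pow_left a ((Nat.Prime.coprime_iff_not_dvd hq).2 hq')).dvd_of_dvd_mul_right
      ?_
    rw [Nat.mul_div_cancel' (Nat.gcd_dvd_right _ _)]
    exact pow_dvd_pow_of_dvd hqb a
  have := Nat.le_of_dvd (Nat.pos_of_ne_zero ha) (hqs.trans (Nat.gcd_dvd_left _ _))
  exact (Nat.lt_two_pow_self.trans_le (Nat.pow_le_pow_left hq.two_le a)).not_ge this

theorem Nat.Prime.not_dvd_totient_of_forall_lt {p m : ℕ} (hp : p.Prime)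
    (hm : ∀ q, q.Prime → q ∣ m → q < p) : ¬ p ∣ m.totient := by
  have hm0 : m ≠ 0 := by rintro rfl; exact (hm p hp (dvd_zero p)).false
  rw [Nat.totient_eq_prod_factorization hm0, Prime.dvd_finsuppProd_iff hp.prime]
  rintro ⟨q, hq, hpq⟩
  rw [Nat.support_factorization, Nat.mem_primeFactors] at hq
  have hqp := hm q hq.1 hq.2.1
  rcases (Nat.Prime.dvd_mul hp).1 hpq with h | h
  · exact hqp.not_ge (Nat.le_of_dvd hq.1.pos (hp.dvd_of_dvd_pow h))
  · exact (Nat.le_of_dvd (Nat.sub_pos_of_lt hq.1.one_lt) h).not_gt (by omega)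

theorem exists_pow_primes_dvd_and_map_eq {G G' : Type*} [Group G] [Monoid G'] (f : G →* G')
    {g : G} (hg : IsOfFinOrder g) {n : ℕ}
    (hfg : ∀ q, q.Prime → q ∣ orderOf (f g) → q ∣ n) :
    ∃ k, (∀ q, q.Prime → q ∣ orderOf (g ^ k) → q ∣ n) ∧ f (g ^ k) = f g := by
  set o := orderOf g
  have ho : o ≠ 0 := hg.orderOf_pos.ne'
  have hso : o.gcd (n ^ o) ∣ o := Nat.gcd_dvd_left _ _
  -- `g ^ t` is the part of `g` whose order has only prime factors dividing `n`.
  set t := o / o.gcd (n ^ o)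
  have htn : t.Coprime n := Nat.coprime_div_gcd_pow_self ho n
  have ht : t.Coprime (orderOf (f g)) := Nat.coprime_of_dvd fun q hq hqt hqf =>
    hq.one_lt.ne' (Nat.eq_one_of_dvd_coprimes htn hqt (hfg q hq hqf))
  have hgt : orderOf (g ^ t) = o.gcd (n ^ o) := by
    have ht0 : t ≠ 0 := (Nat.div_ne_zero_iff_of_dvd hso).2
      ⟨ho, (Nat.gcd_pos_of_pos_left _ (Nat.pos_of_ne_zero ho)).ne'⟩
    rw [orderOf_pow_of_dvd ht0 (Nat.div_dvd_of_dvd hso), Nat.div_div_self hso ho]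
  obtain ⟨j, hj⟩ := exists_pow_eq_self_of_coprime ht
  refine ⟨t * j, fun q hq hdvd => ?_, by rw [pow_mul, map_pow, map_pow, hj]⟩
  rw [pow_mul] at hdvd
  exact hq.dvd_of_dvd_pow ((hdvd.trans (orderOf_pow_dvd j)).trans (hgt ▸ Nat.gcd_dvd_right _ _))

theorem IsHallPiSubgroup.prime_mem_of_dvd_orderOf {G : Type*} [Group G] {π : Set ℕ}
    {H : Subgroup G} (hH : IsHallPiSubgroup π H) {g : G} (hg : g ∈ H) {q : ℕ} (hq : q.Prime)
    (hqg : q ∣ orderOf g) : q ∈ π :=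
  hH.1 q hq (hqg.trans (H.orderOf_dvd_natCard hg))

theorem IsHallPiSubgroup.eq_of_le {G : Type*} [Group G] [Finite G] {π : Set ℕ}
    {H K : Subgroup G} (hH : IsHallPiSubgroup π H) (hHK : H ≤ K)
    (hK : ∀ g ∈ K, ∀ q, q.Prime → q ∣ orderOf g → q ∈ π) : H = K := by
  refine le_antisymm hHK (Subgroup.relIndex_eq_one.mp ?_)
  by_contra hne
  obtain ⟨q, hq, hqHK⟩ := Nat.exists_prime_and_dvd hne
  have : Fact q.Prime := ⟨hq⟩
  obtain ⟨x, hx⟩ := exists_prime_orderOf_dvd_card' (G := K) q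
    (hqHK.trans (Subgroup.relIndex_dvd_card H K))
  exact hH.2 q (hK x x.2 q hq (by rw [Subgroup.orderOf_coe, hx]))
    (hqHK.trans (Subgroup.relIndex_dvd_index_of_le hHK))

section Holomorph

variable {N : Type*} [Group N]

theorem holSmul_one (x : N) : holSmul 1 x = x := by
  simp [holSmul]

theorem holSmul_mul (g h : Hol N) (x : N) : holSmul (g * h) x = holSmul g (holSmul h x) := by
  simp only [holSmul, mul_left, mul_right, MonoidHom.id_apply, MulAut.mul_apply, map_mul, mul_assoc]

instance : MulAction (Hol N) N where
  smul := holSmul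
  one_smul := holSmul_one
  mul_smul := holSmul_mul

theorem Hol.smul_def (g : Hol N) (x : N) : g • x = holSmul g x := rfl

theorem Hol.inl_smul (y x : N) : (inl y : Hol N) • x = y * x := by
  simp [Hol.smul_def, holSmul]

instance [Finite N] : Finite (Hol N) := Finite.of_equiv _ equivProd.symm

end Holomorph

theorem Hol.inl_mem_of_pow_eq_one {N : Type*} [CommGroup N] [IsCyclic N] [Finite N] {p : ℕ}
    (hp : p.Prime) (hpN : ¬ p ∣ Nat.card (MulAut N)) {M : Subgroup (Hol N)}
    (hpM : p ∣ Nat.card M) {y : N} (hy : y ^ p = 1) : inl y ∈ M := by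
  have : Fact p.Prime := ⟨hp⟩
  obtain ⟨⟨x, hxM⟩, hx⟩ := exists_prime_orderOf_dvd_card' (G := M) p hpM
  rw [Subgroup.orderOf_mk] at hx
  have hright : rightHom x = 1 := by
    rcases (Nat.dvd_prime hp).1 (hx ▸ orderOf_map_dvd rightHom x) with h | h
    · exact orderOf_eq_one_iff.1 h
    · exact absurd (h ▸ orderOf_dvd_natCard _) hpN
  have hx_inl : inl x.left = x := by
    have := inl_left_mul_inr_right x
    rwa [show x.right = 1 from hright, map_one, mul_one] at this
  have hy₀ : orderOf x.left = p := by
    rw [← orderOf_injective (inl : N →* Hol N) inl_injective, hx_inl, hx]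
  have hker : Subgroup.zpowers x.left = (powMonoidHom p : N →* N).ker := by
    refine Subgroup.eq_of_le_of_card_ge (Subgroup.zpowers_le.2 ?_) ?_
    · simp [← hy₀, pow_orderOf_eq_one]
    · rw [IsCyclic.card_powMonoidHom_ker, Nat.card_zpowers, hy₀]
      exact Nat.gcd_le_right _ hp.pos
  obtain ⟨k, rfl⟩ : y ∈ Subgroup.zpowers x.left := hker ▸ hy
  rw [map_zpow, hx_inl]
  exact zpow_mem hxM k

section ZMod

variable {m n : ℕ}

theorem Nat.card_multiplicative_zmod (n : ℕ) : Nat.card (Multiplicative (ZMod n)) = n :=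
  (Nat.card_congr toAdd).trans (Nat.card_zmod n)

def mulAutEquivUnits (n : ℕ) : MulAut (Multiplicative (ZMod n)) ≃* (ZMod n)ˣ :=
  (MulAutMultiplicative (ZMod n)).trans (ZMod.AddAutEquivUnits n).toMultiplicative

theorem mulAutEquivUnits_symm_apply (u : (ZMod n)ˣ) (x : Multiplicative (ZMod n)) :
    (mulAutEquivUnits n).symm u x = ofAdd (u * x.toAdd) := rfl

theorem mulAut_apply_eq_ofAdd_mul (σ : MulAut (Multiplicative (ZMod n)))
    (x : Multiplicative (ZMod n)) : σ x = ofAdd (mulAutEquivUnits n σ * x.toAdd) := by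
  rw [← mulAutEquivUnits_symm_apply, MulEquiv.symm_apply_apply]

theorem mulAut_commute (σ τ : MulAut (Multiplicative (ZMod n))) : Commute σ τ := by
  simpa using (Commute.all (mulAutEquivUnits n σ) (mulAutEquivUnits n τ)).map
    (mulAutEquivUnits n).symm

def holPiSubgroup (n : ℕ) : Subgroup (Hol (Multiplicative (ZMod n))) where
  carrier := {g | ∀ q, q.Prime → q ∣ orderOf (rightHom g) → q ∣ n}
  one_mem' q hq h := by
    rw [map_one, orderOf_one, Nat.dvd_one] at h
    exact absurd h hq.ne_one
  mul_mem' {g h} hg hh q hq hdvd := by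
    rw [map_mul] at hdvd
    rcases hq.dvd_mul.1 (hdvd.trans (mulAut_commute _ _).orderOf_mul_dvd_mul_orderOf) with h' | h'
    exacts [hg q hq h', hh q hq h']
  inv_mem' {g} hg q hq hdvd := by
    rw [map_inv, orderOf_inv] at hdvd
    exact hg q hq hdvd

theorem inl_mem_holPiSubgroup (y : Multiplicative (ZMod n)) : inl y ∈ holPiSubgroup n := by
  intro q hq h
  rw [rightHom_inl, orderOf_one, Nat.dvd_one] at h
  exact absurd h hq.ne_one

theorem mem_holPiSubgroup_of_prime_dvd_orderOf {g : Hol (Multiplicative (ZMod n))}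
    (hg : ∀ q, q.Prime → q ∣ orderOf g → q ∣ n) : g ∈ holPiSubgroup n :=
  fun q hq h => hg q hq (h.trans (orderOf_map_dvd _ g))

theorem dvd_of_prime_dvd_orderOf_of_mem_holPiSubgroup {g : Hol (Multiplicative (ZMod n))}
    (hg : g ∈ holPiSubgroup n) {q : ℕ} (hq : q.Prime) (hqg : q ∣ orderOf g) : q ∣ n := by
  set k := orderOf (rightHom g)
  obtain ⟨y, hy⟩ : g ^ k ∈ (inl : Multiplicative (ZMod n) →* _).range := by
    rw [range_inl_eq_ker_rightHom, MonoidHom.mem_ker, map_pow, pow_orderOf_eq_one]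
  have hgk : orderOf g ∣ k * orderOf (g ^ k) :=
    orderOf_dvd_of_pow_eq_one (by rw [pow_mul, pow_orderOf_eq_one])
  rcases hq.dvd_mul.1 (hqg.trans hgk) with h | h
  · exact hg q hq h
  · rw [← hy, orderOf_injective _ inl_injective] at h
    exact Nat.card_multiplicative_zmod n ▸ h.trans (orderOf_dvd_natCard y)

theorem holPiSubgroup_eq_of_isHallPiSubgroup [NeZero n]
    {H : Subgroup (Hol (Multiplicative (ZMod n)))}
    (hH : IsHallPiSubgroup {q : ℕ | q.Prime ∧ q ∣ n} H) : H = holPiSubgroup n :=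
  hH.eq_of_le
    (fun _ hg => mem_holPiSubgroup_of_prime_dvd_orderOf fun _ hq hqg =>
      (hH.prime_mem_of_dvd_orderOf hg hq hqg).2)
    fun _ hg _ hq hqg => ⟨hq, dvd_of_prime_dvd_orderOf_of_mem_holPiSubgroup hg hq hqg⟩

def zmodReduce (h : m ∣ n) : Multiplicative (ZMod n) →* Multiplicative (ZMod m) :=
  (ZMod.castHom h (ZMod m)).toAddMonoidHom.toMultiplicative

theorem zmodReduce_surjective (h : m ∣ n) : Function.Surjective (zmodReduce h) :=
  ZMod.castHom_surjective h

theorem pow_eq_one_of_zmodReduce_eq_one {p : ℕ} [NeZero (p * m)]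
    {x : Multiplicative (ZMod (p * m))}
    (hx : zmodReduce (dvd_mul_left m p) x = 1) : x ^ p = 1 := by
  have hm : ((toAdd x).val : ZMod m) = 0 := by
    rw [ZMod.natCast_val]
    exact congrArg toAdd hx
  obtain ⟨k, hk⟩ := (ZMod.natCast_eq_zero_iff _ _).1 hm
  apply toAdd.injective
  rw [toAdd_pow, toAdd_one, ← ZMod.natCast_zmod_val (toAdd x), hk, nsmul_eq_mul, ← Nat.cast_mul,
    ← mul_assoc, Nat.cast_mul, ZMod.natCast_self, zero_mul]

def mulAutReduce (h : m ∣ n) :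
    MulAut (Multiplicative (ZMod n)) →* MulAut (Multiplicative (ZMod m)) :=
  (mulAutEquivUnits m).symm.toMonoidHom.comp
    ((ZMod.unitsMap h).comp (mulAutEquivUnits n).toMonoidHom)

theorem zmodReduce_mulAut_apply (h : m ∣ n) (σ : MulAut (Multiplicative (ZMod n)))
    (x : Multiplicative (ZMod n)) : zmodReduce h (σ x) = mulAutReduce h σ (zmodReduce h x) := by
  rw [mulAut_apply_eq_ofAdd_mul σ]
  exact congrArg ofAdd (map_mul (ZMod.castHom h (ZMod m)) _ _)

def holReduce (h : m ∣ n) : Hol (Multiplicative (ZMod n)) →* Hol (Multiplicative (ZMod m)) :=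
  SemidirectProduct.map (zmodReduce h) (mulAutReduce h) fun σ =>
    MonoidHom.ext (zmodReduce_mulAut_apply h σ)

theorem holReduce_smul (h : m ∣ n) (g : Hol (Multiplicative (ZMod n)))
    (x : Multiplicative (ZMod n)) : holReduce h g • zmodReduce h x = zmodReduce h (g • x) := by
  simp [Hol.smul_def, holSmul, holReduce, zmodReduce_mulAut_apply]

theorem isPretransitive_map_holReduce (h : m ∣ n) {M : Subgroup (Hol (Multiplicative (ZMod n)))}
    (hM : IsPretransitive M (Multiplicative (ZMod n))) :
    IsPretransitive (M.map (holReduce h)) (Multiplicative (ZMod m)) :=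
  hM.of_surjective_map (φ := (holReduce h).subgroupMap M)
    (f := ⟨zmodReduce h, fun g x => (holReduce_smul h g x).symm⟩) (zmodReduce_surjective h)

theorem exists_mem_inf_holPiSubgroup_holReduce_eq [NeZero n] (h : m ∣ n)
    {M : Subgroup (Hol (Multiplicative (ZMod n)))} {g₀ : Hol (Multiplicative (ZMod n))}
    (hg₀ : g₀ ∈ M) (hK : holReduce h g₀ ∈ holPiSubgroup m) :
    ∃ g ∈ M ⊓ holPiSubgroup n, holReduce h g = holReduce h g₀ := by
  obtain ⟨k, hk, hgk⟩ :=
    exists_pow_primes_dvd_and_map_eq (holReduce h) (isOfFinOrder_of_finite g₀)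
    fun q hq hqg => (dvd_of_prime_dvd_orderOf_of_mem_holPiSubgroup hK hq hqg).trans h
  exact ⟨g₀ ^ k, ⟨pow_mem hg₀ k, mem_holPiSubgroup_of_prime_dvd_orderOf hk⟩, hgk⟩

theorem isPretransitive_inf_holPiSubgroup_mul {p : ℕ} (hp : p.Prime)
    (hm : ∀ q, q.Prime → q ∣ m → q < p)
    (ih : ∀ M : Subgroup (Hol (Multiplicative (ZMod m))),
      IsPretransitive M (Multiplicative (ZMod m)) →
      IsPretransitive ↥(M ⊓ holPiSubgroup m) (Multiplicative (ZMod m)))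
    {M : Subgroup (Hol (Multiplicative (ZMod (p * m))))}
    (hM : IsPretransitive M (Multiplicative (ZMod (p * m)))) :
    IsPretransitive ↥(M ⊓ holPiSubgroup (p * m)) (Multiplicative (ZMod (p * m))) := by
  have hpm : ¬ p ∣ m := fun h => (hm p hp h).false
  have : NeZero m := ⟨fun h => hpm (h ▸ dvd_zero p)⟩
  have : NeZero (p * m) := ⟨mul_ne_zero hp.ne_zero (NeZero.ne m)⟩
  have hdvd : m ∣ p * m := dvd_mul_left m p
  have hpM : p ∣ Nat.card M := by
    have := (stabilizer M (1 : Multiplicative (ZMod (p * m)))).index_dvd_card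
    rw [index_stabilizer_of_transitive, Nat.card_multiplicative_zmod] at this
    exact (dvd_mul_right p m).trans this
  have hpAut : ¬ p ∣ Nat.card (MulAut (Multiplicative (ZMod (p * m)))) := by
    rw [IsCyclic.card_mulAut, Nat.card_multiplicative_zmod,
      Nat.totient_mul_of_prime_of_not_dvd hp hpm]
    exact fun h => (hp.dvd_mul.1 h).elim
      (Nat.not_dvd_of_pos_of_lt (Nat.sub_pos_of_lt hp.one_lt) (Nat.sub_lt hp.pos one_pos))
      (hp.not_dvd_totient_of_forall_lt hm)
  refine ⟨fun a b => ?_⟩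
  obtain ⟨⟨g', hg'⟩, hg'ab⟩ := (ih _ (isPretransitive_map_holReduce hdvd hM)).exists_smul_eq
    (zmodReduce hdvd a) (zmodReduce hdvd b)
  replace hg'ab : g' • zmodReduce hdvd a = zmodReduce hdvd b := hg'ab
  obtain ⟨g₀, hg₀, rfl⟩ := Subgroup.mem_map.1 hg'.1
  obtain ⟨g, hg, hgg₀⟩ := exists_mem_inf_holPiSubgroup_holReduce_eq hdvd hg₀ hg'.2
  set z := b * (g • a)⁻¹
  have hz : inl z ∈ M := by
    refine Hol.inl_mem_of_pow_eq_one hp hpAut hpM (pow_eq_one_of_zmodReduce_eq_one ?_)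
    rw [map_mul, map_inv, ← holReduce_smul, hgg₀, hg'ab, mul_inv_cancel]
  refine ⟨⟨inl z * g, mul_mem ⟨hz, inl_mem_holPiSubgroup z⟩ hg⟩, ?_⟩
  change (inl z * g) • a = b
  rw [mul_smul, Hol.inl_smul, inv_mul_cancel_right]

theorem isPretransitive_inf_holPiSubgroup_of_eq_prod {s : Finset ℕ} (hs : ∀ q ∈ s, q.Prime)
    (hn : n = ∏ q ∈ s, q) {M : Subgroup (Hol (Multiplicative (ZMod n)))}
    (hM : IsPretransitive M (Multiplicative (ZMod n))) :
    IsPretransitive ↥(M ⊓ holPiSubgroup n) (Multiplicative (ZMod n)) := by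
  induction s using Finset.induction_on_max generalizing n with
  | empty =>
    rw [Finset.prod_empty] at hn
    subst hn
    exact ⟨fun a b => ⟨1, Subsingleton.elim _ _⟩⟩
  | insert p s hlt ih =>
    rw [Finset.prod_insert fun h => (hlt p h).false] at hn
    subst hn
    refine isPretransitive_inf_holPiSubgroup_mul (hs p (s.mem_insert_self p)) (fun q hq hqs => ?_)
      (fun M' hM' => ih (fun q hq => hs q (Finset.mem_insert_of_mem hq)) rfl hM') hM
    obtain ⟨r, hr, hqr⟩ := (Prime.dvd_finsetProd_iff hq.prime _).1 hqs
    exact (Nat.prime_dvd_prime_iff_eq hq (hs r (Finset.mem_insert_of_mem hr))).1 hqr ▸ hlt r hr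

end ZMod

theorem inf_hall_transitive_of_transitive_general
    (l : ℕ) (p : ℕ → ℕ)
    (hprime : ∀ i, 1 ≤ i → i ≤ l → (p i).Prime)
    (hchain : ∀ i, 1 ≤ i → i < l → p i = 2 * p (i + 1) + 1)
    (n : ℕ) (hn : n = ∏ i ∈ Finset.Icc 1 l, p i)
    (H : Subgroup (Hol (Multiplicative (ZMod n))))
    (hH : IsHallPiSubgroup {q : ℕ | q.Prime ∧ q ∣ n} H)
    (M : Subgroup (Hol (Multiplicative (ZMod n))))
    (hM : ∀ a b : Multiplicative (ZMod n), ∃ g ∈ M, holSmul g a = b) :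
    ∀ a b : Multiplicative (ZMod n), ∃ g ∈ M ⊓ H, holSmul g a = b := by
  have hanti : StrictAntiOn p (Set.Icc 1 l) :=
    strictAntiOn_of_add_one_lt Set.ordConnected_Icc fun i _ hi hi' => by
      have := hchain i hi.1 (by simpa using hi'.2); omega
  have hs : ∀ q ∈ (Finset.Icc 1 l).image p, q.Prime := by
    simp only [Finset.mem_image, Finset.mem_Icc]
    rintro _ ⟨i, hi, rfl⟩
    exact hprime i hi.1 hi.2
  have hn' : n = ∏ q ∈ (Finset.Icc 1 l).image p, q := by
    rw [Finset.prod_image (by simpa using hanti.injOn), hn]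
  have : NeZero n := ⟨hn' ▸ Finset.prod_ne_zero_iff.2 fun q hq => (hs q hq).ne_zero⟩
  rw [holPiSubgroup_eq_of_isHallPiSubgroup hH]
  intro a b
  obtain ⟨⟨g, hg⟩, hgab⟩ := (isPretransitive_inf_holPiSubgroup_of_eq_prod hs hn'
    ⟨fun a b => (hM a b).elim fun g ⟨hg, h⟩ => ⟨⟨g, hg⟩, h⟩⟩).exists_smul_eq a b
  exact ⟨g, hg, hgab⟩

/-- Let `n = p₁ ⋯ p_l` be a Cunningham product, `N = C_n`, `π` the set of primes dividing
`n`, and `H` the (unique) Hall `π`-subgroup of `Hol(N)`.  If `M ≤ Hol(N)` acts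
transitively on `N`, then `M ⊓ H` also acts transitively on `N`. -/
theorem inf_hall_transitive_of_transitive
    (l : ℕ) (hl : 1 ≤ l) (p : ℕ → ℕ)
    (hprime : ∀ i, 1 ≤ i → i ≤ l → (p i).Prime)
    (hodd : ∀ i, 1 ≤ i → i ≤ l → Odd (p i))
    (hchain : ∀ i, 1 ≤ i → i < l → p i = 2 * p (i + 1) + 1)
    (n : ℕ) (hn : n = ∏ i ∈ Finset.Icc 1 l, p i)
    (H : Subgroup (Hol (Multiplicative (ZMod n))))
    (hH : IsHallPiSubgroup {q : ℕ | q.Prime ∧ q ∣ n} H)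
    (M : Subgroup (Hol (Multiplicative (ZMod n))))
    (hM : ∀ a b : Multiplicative (ZMod n), ∃ g ∈ M, holSmul g a = b) :
    ∀ a b : Multiplicative (ZMod n), ∃ g ∈ M ⊓ H, holSmul g a = b :=
  inf_hall_transitive_of_transitive_general l p hprime hchain n hn H hH M hM
end

section
/- Let n = p_1 ⋯ p_l be a Cunningham product, let I be a nonempty subset of {2, …, l} containing no two consecutive integers, let m = n / ∏_{i∈I} p_{i−1} p_i, and let N = C_m × ∏_{i∈I} (C_{p_{i−1}} ⋊ C_{p_i}), where each C_{p_{i−1}} ⋊ C_{p_i} is the nonabelian group of order p_{i−1} p_i. Then Hol(N) = Hol(C_m) × ∏_{i∈I} Hol(C_{p_{i−1}} ⋊ C_{p_i}). Suppose M_0, M_0' ≤ Hol(C_m) act transitively on C_m, and for each i ∈ I, M_i, M_i' ≤ Hol(C_{p_{i−1}} ⋊ C_{p_i}) act transitively on C_{p_{i−1}} ⋊ C_{p_i}, so that M := M_0 × ∏_{i∈I} M_i and M' := M_0' × ∏_{i∈I} M_i' are transitive subgroups of Hol(N). Then M and M' are isomorphic as permutation groups if and only if M_j and M_j' are isomorphic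 as permutation groups for each j ∈ {0} ∪ I. -/
/-- The componentwise action of `Hol(A) × ∏ᵢ Hol(Bᵢ)` on `A × ∏ᵢ Bᵢ`. -/
def prodHolSmul {A : Type*} [Group A] {η : Type*} {B : η → Type*} [∀ i, Group (B i)]
    (g : Hol A × ((i : η) → Hol (B i))) (x : A × ((i : η) → B i)) :
    A × ((i : η) → B i) :=
  (holSmul g.1 x.1, fun i => holSmul (g.2 i) (x.2 i))

open MulAction

instance Hol.instMulAction {N : Type*} [Group N] : MulAction (Hol N) N where
  smul := holSmul
  one_smul x := show holSmul 1 x = x by simp [holSmul]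
  mul_smul g h x := show holSmul (g * h) x = holSmul g (holSmul h x) by
    simp [holSmul, mul_assoc]

instance Hol.instFaithfulSMul {N : Type*} [Group N] : FaithfulSMul (Hol N) N where
  eq_of_smul_eq_smul {g h} hgh := by
    have hgh' (x : N) : holSmul g x = holSmul h x := hgh x
    have hleft : g.left = h.left := by simpa [holSmul] using hgh' 1
    refine SemidirectProduct.ext hleft (MulEquiv.ext fun x => ?_)
    simpa [holSmul, hleft] using hgh' x

instance Prod.mulAction' {H₁ H₂ Y₁ Y₂ : Type*} [Monoid H₁] [Monoid H₂] [MulAction H₁ Y₁]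
    [MulAction H₂ Y₂] : MulAction (H₁ × H₂) (Y₁ × Y₂) where
  smul g x := (g.1 • x.1, g.2 • x.2)
  one_smul x := Prod.ext (one_smul _ x.1) (one_smul _ x.2)
  mul_smul g h x := Prod.ext (mul_smul g.1 h.1 x.1) (mul_smul g.2 h.2 x.2)

instance Pi.isPretransitive' {ι : Type*} {H Y : ι → Type*} [∀ i, Monoid (H i)]
    [∀ i, MulAction (H i) (Y i)] [∀ i, IsPretransitive (H i) (Y i)] :
    IsPretransitive (∀ i, H i) (∀ i, Y i) :=
  ⟨fun x y => ⟨fun i => (exists_smul_eq (H i) (x i) (y i)).choose,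
    funext fun i => (exists_smul_eq (H i) (x i) (y i)).choose_spec⟩⟩

instance Pi.faithfulSMul' {ι : Type*} {H Y : ι → Type*} [∀ i, Monoid (H i)]
    [∀ i, MulAction (H i) (Y i)] [∀ i, Nonempty (Y i)] [∀ i, FaithfulSMul (H i) (Y i)] :
    FaithfulSMul (∀ i, H i) (∀ i, Y i) where
  eq_of_smul_eq_smul {g g'} h := by
    classical
    refine funext fun i => eq_of_smul_eq_smul (α := Y i) fun a => ?_
    simpa using congrFun (h (Function.update (fun _ => Classical.arbitrary _) i a)) i

theorem Subgroup.isPretransitive_of_exists_smul_eq {G X : Type*} [Group G] [MulAction G X]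
    {M : Subgroup G} (h : ∀ a b : X, ∃ g ∈ M, g • a = b) : IsPretransitive M X :=
  ⟨fun a b => let ⟨g, hg, hab⟩ := h a b; ⟨⟨g, hg⟩, hab⟩⟩

def Subgroup.piUnivEquiv {ι : Type*} {H : ι → Type*} [∀ i, Group (H i)]
    (M : ∀ i, Subgroup (H i)) : Subgroup.pi Set.univ M ≃* ∀ i, M i where
  toFun g i := ⟨g.1 i, g.2 i (Set.mem_univ i)⟩
  invFun g := ⟨fun i => g i, fun i _ => (g i).2⟩
  left_inv _ := rfl
  right_inv _ := rfl
  map_mul' _ _ := rfl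

def PermIsomorphic (H X K Y : Type*) [Group H] [Group K] [MulAction H X] [MulAction K Y] :
    Prop :=
  ∃ (φ : H ≃* K) (f : X ≃ Y), ∀ (g : H) (x : X), f (g • x) = φ g • f x

namespace PermIsomorphic

section Basic

variable {H K L X Y Z : Type*} [Group H] [Group K] [Group L]
  [MulAction H X] [MulAction K Y] [MulAction L Z]

theorem symm_apply_smul {φ : H ≃* K} {f : X ≃ Y} (hf : ∀ g x, f (g • x) = φ g • f x)
    (k : K) (y : Y) : f.symm (k • y) = φ.symm k • f.symm y := by
  rw [Equiv.symm_apply_eq, hf, MulEquiv.apply_symm_apply, Equiv.apply_symm_apply]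

theorem symm (h : PermIsomorphic H X K Y) : PermIsomorphic K Y H X :=
  let ⟨_, _, hf⟩ := h
  ⟨_, _, symm_apply_smul hf⟩

theorem trans (h₁ : PermIsomorphic H X K Y) (h₂ : PermIsomorphic K Y L Z) :
    PermIsomorphic H X L Z := by
  obtain ⟨φ, f, hf⟩ := h₁
  obtain ⟨ψ, e, he⟩ := h₂
  exact ⟨φ.trans ψ, f.trans e, fun g x => by simp [hf, he]⟩

theorem congr {H' K' X' Y' : Type*} [Group H'] [Group K'] [MulAction H' X'] [MulAction K' Y']
    (hH : PermIsomorphic H X H' X') (hK : PermIsomorphic K Y K' Y') :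
    PermIsomorphic H X K Y ↔ PermIsomorphic H' X' K' Y' :=
  ⟨fun h => hH.symm.trans (h.trans hK), fun h => hH.trans (h.trans hK.symm)⟩

theorem prod {H' K' X' Y' : Type*} [Group H'] [Group K'] [MulAction H' X'] [MulAction K' Y']
    (h : PermIsomorphic H X K Y) (h' : PermIsomorphic H' X' K' Y') :
    PermIsomorphic (H × H') (X × X') (K × K') (Y × Y') := by
  obtain ⟨φ, f, hf⟩ := h
  obtain ⟨φ', f', hf'⟩ := h'
  exact ⟨φ.prodCongr φ', f.prodCongr f', fun g x => Prod.ext (hf g.1 x.1) (hf' g.2 x.2)⟩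

theorem prodComm {H' X' : Type*} [Group H'] [MulAction H' X'] :
    PermIsomorphic (H × H') (X × X') (H' × H) (X' × X) :=
  ⟨MulEquiv.prodComm, Equiv.prodComm _ _, fun _ _ => rfl⟩

end Basic

variable {ι : Type*} {H K X Y : ι → Type*} [∀ i, Group (H i)] [∀ i, Group (K i)]
  [∀ i, MulAction (H i) (X i)] [∀ i, MulAction (K i) (Y i)]

theorem pi (h : ∀ i, PermIsomorphic (H i) (X i) (K i) (Y i)) :
    PermIsomorphic (∀ i, H i) (∀ i, X i) (∀ i, K i) (∀ i, Y i) := by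
  choose φ f hf using h
  exact ⟨.piCongrRight φ, .piCongrRight f, fun g x => funext fun i => hf i (g i) (x i)⟩

theorem piSplitAt [DecidableEq ι] (i : ι) :
    PermIsomorphic (∀ j, H j) (∀ j, X j) (H i × ∀ j : {j // j ≠ i}, H j)
      (X i × ∀ j : {j // j ≠ i}, X j) :=
  ⟨{ Equiv.piSplitAt i H with map_mul' := fun _ _ => rfl }, Equiv.piSplitAt i X,
    fun _ _ => rfl⟩

theorem subgroup_prod_pi {H₀ X₀ : Type*} [Group H₀] [MulAction H₀ X₀] (M₀ : Subgroup H₀)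
    (M : ∀ i, Subgroup (H i)) :
    PermIsomorphic (M₀.prod (Subgroup.pi Set.univ M)) (X₀ × ∀ i, X i) (M₀ × ∀ i, M i)
      (X₀ × ∀ i, X i) :=
  ⟨(M₀.prodEquiv _).trans ((MulEquiv.refl _).prodCongr (Subgroup.piUnivEquiv M)), Equiv.refl _,
    fun _ _ => rfl⟩

end PermIsomorphic

theorem MulAction.smul_eq_self_of_normal_of_coprime {G X : Type*} [Group G] [MulAction G X]
    [IsPretransitive G X] [Finite X] {N : Subgroup G} [N.Normal] {y : X} {d : ℕ}
    (hd : (stabilizer N y).index ∣ d) (hcop : d.Coprime (Nat.card X)) {g : G} (hg : g ∈ N) :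
    g • y = y := by
  have horbit : (orbit N y).ncard = 1 := by
    refine Nat.eq_one_of_dvd_coprimes hcop ?_
      ((IsBlock.orbit_of_normal y).ncard_dvd_card ⟨y, mem_orbit_self y⟩)
    rwa [← index_stabilizer]
  obtain ⟨z, hz⟩ := Set.ncard_eq_one.mp horbit
  have hgy : g • y ∈ orbit N y := mem_orbit y (⟨g, hg⟩ : N)
  have hy : y ∈ orbit N y := mem_orbit_self y
  rw [hz] at hgy hy
  exact hgy.trans hy.symm

section ProdFactor

variable {H₁ H₂ K₁ K₂ Y₁ Y₂ : Type*} [Group H₁] [Group H₂] [Group K₁] [Group K₂]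
  [MulAction H₁ Y₁] [MulAction H₂ Y₂] [MulAction K₁ Y₁] [MulAction K₂ Y₂]

theorem snd_apply_inl_eq_one_of_coprime [Finite Y₂] [Nonempty Y₁] [IsPretransitive H₁ Y₁]
    [IsPretransitive K₂ Y₂] [FaithfulSMul K₂ Y₂] (hcop : (Nat.card Y₁).Coprime (Nat.card Y₂))
    (φ : H₁ × H₂ ≃* K₁ × K₂) (f : Y₁ × Y₂ ≃ Y₁ × Y₂) (hf : ∀ g x, f (g • x) = φ g • f x)
    (h : H₁) : (φ (h, 1)).2 = 1 := by
  let θ : H₁ →* K₂ := (MonoidHom.snd K₁ K₂).comp (φ.toMonoidHom.comp (MonoidHom.inl H₁ H₂))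
  have : θ.range.Normal := by
    have hinl : (MonoidHom.inl H₁ H₂).range = (MonoidHom.snd H₁ H₂).ker := by
      ext ⟨a, b⟩; simp [Subgroup.mem_prod, eq_comm]
    rw [← MonoidHom.map_range, ← MonoidHom.map_range, hinl]
    exact ((MonoidHom.normal_ker _).map _ φ.surjective).map _ Prod.snd_surjective
  refine eq_of_smul_eq_smul (α := Y₂) fun y => ?_
  obtain ⟨a⟩ := ‹Nonempty Y₁›
  set x := f.symm (a, y)
  -- `θ` maps a point stabilizer of `H₁` into the stabilizer of `y`, whence `|θ.range • y| ∣ |Y₁|`.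
  have hstab : stabilizer H₁ x.1 ≤ (stabilizer K₂ y).comap θ := by
    intro h' hh'
    have hfix : ((h', 1) : H₁ × H₂) • x = x := Prod.ext hh' (one_smul _ _)
    have := congrArg Prod.snd (hf (h', 1) x)
    rw [hfix, Equiv.apply_symm_apply] at this
    exact this.symm
  have hdvd : (stabilizer θ.range y).index ∣ Nat.card Y₁ := by
    rw [← index_stabilizer_of_transitive H₁ x.1]
    have : (stabilizer θ.range y).index = ((stabilizer K₂ y).comap θ).index := by
      rw [Subgroup.index_comap]; rfl
    rw [this]
    exact Subgroup.index_dvd_of_le hstab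
  rw [one_smul]
  exact smul_eq_self_of_normal_of_coprime hdvd hcop ⟨h, rfl⟩

namespace PermIsomorphic

variable [Finite Y₁] [Finite Y₂] [Nonempty Y₁] [Nonempty Y₂]
  [IsPretransitive H₁ Y₁] [IsPretransitive H₂ Y₂] [IsPretransitive K₁ Y₁] [IsPretransitive K₂ Y₂]

theorem of_prod_fst [FaithfulSMul H₂ Y₂] [FaithfulSMul K₂ Y₂]
    (hcop : (Nat.card Y₁).Coprime (Nat.card Y₂))
    (h : PermIsomorphic (H₁ × H₂) (Y₁ × Y₂) (K₁ × K₂) (Y₁ × Y₂)) :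
    PermIsomorphic H₁ Y₁ K₁ Y₁ := by
  obtain ⟨φ, f, hf⟩ := h
  have hφ (h : H₁) : φ (h, 1) = ((φ (h, 1)).1, 1) :=
    Prod.ext rfl (snd_apply_inl_eq_one_of_coprime hcop φ f hf h)
  have hφ' (k : K₁) : φ.symm (k, 1) = ((φ.symm (k, 1)).1, 1) :=
    Prod.ext rfl (snd_apply_inl_eq_one_of_coprime hcop φ.symm f.symm (symm_apply_smul hf) k)
  let ψ : H₁ ≃* K₁ :=
    { toFun h := (φ (h, 1)).1
      invFun k := (φ.symm (k, 1)).1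
      left_inv h := by simp only; rw [← hφ, φ.symm_apply_apply]
      right_inv k := by simp only; rw [← hφ', φ.apply_symm_apply]
      map_mul' h h' := by rw [← Prod.fst_mul, ← map_mul, Prod.mk_mul_mk, one_mul] }
  obtain ⟨b⟩ := ‹Nonempty Y₂›
  have hf_inl (h : H₁) (a : Y₁) : f (h • a, b) = (ψ h • (f (a, b)).1, (f (a, b)).2) := by
    have hact : ((h, 1) : H₁ × H₂) • ((a, b) : Y₁ × Y₂) = (h • a, b) :=
      Prod.ext rfl (one_smul _ _)
    rw [← hact, hf, hφ]
    exact Prod.ext rfl (one_smul _ _)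
  refine ⟨ψ, Equiv.ofBijective (fun a => (f (a, b)).1) (Finite.injective_iff_bijective.mp ?_),
    fun h a => congrArg Prod.fst (hf_inl h a)⟩
  intro a a' haa'
  obtain ⟨h, rfl⟩ := exists_smul_eq H₁ a a'
  exact congrArg Prod.fst (f.injective (Prod.ext haa' (congrArg Prod.snd (hf_inl h a)).symm))

theorem of_prod_snd [FaithfulSMul H₁ Y₁] [FaithfulSMul K₁ Y₁]
    (hcop : (Nat.card Y₁).Coprime (Nat.card Y₂))
    (h : PermIsomorphic (H₁ × H₂) (Y₁ × Y₂) (K₁ × K₂) (Y₁ × Y₂)) :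
    PermIsomorphic H₂ Y₂ K₂ Y₂ :=
  ((prodComm.congr prodComm).mp h).of_prod_fst hcop.symm

end PermIsomorphic

end ProdFactor

namespace PermIsomorphic

variable {ι : Type*} [Fintype ι] [DecidableEq ι] {H K Y : ι → Type*} [∀ i, Group (H i)]
  [∀ i, Group (K i)] [∀ i, MulAction (H i) (Y i)] [∀ i, MulAction (K i) (Y i)]
  [∀ i, Finite (Y i)] [∀ i, Nonempty (Y i)]
  [∀ i, IsPretransitive (H i) (Y i)] [∀ i, IsPretransitive (K i) (Y i)]
  [∀ i, FaithfulSMul (H i) (Y i)] [∀ i, FaithfulSMul (K i) (Y i)]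
  (hcop : Pairwise fun i j => (Nat.card (Y i)).Coprime (Nat.card (Y j)))
include hcop

theorem of_pi (h : PermIsomorphic (∀ i, H i) (∀ i, Y i) (∀ i, K i) (∀ i, Y i)) (i : ι) :
    PermIsomorphic (H i) (Y i) (K i) (Y i) := by
  refine (((piSplitAt i).congr (piSplitAt i)).mp h).of_prod_fst ?_
  rw [Nat.card_pi]
  exact Nat.Coprime.prod_right fun j _ => hcop j.2.symm

theorem prod_pi_iff {H₀ K₀ Y₀ : Type*} [Group H₀] [Group K₀] [MulAction H₀ Y₀]
    [MulAction K₀ Y₀] [Finite Y₀] [Nonempty Y₀] [IsPretransitive H₀ Y₀] [IsPretransitive K₀ Y₀]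
    [FaithfulSMul H₀ Y₀] [FaithfulSMul K₀ Y₀]
    (hcop₀ : ∀ i, (Nat.card Y₀).Coprime (Nat.card (Y i))) :
    PermIsomorphic (H₀ × ∀ i, H i) (Y₀ × ∀ i, Y i) (K₀ × ∀ i, K i) (Y₀ × ∀ i, Y i) ↔
      PermIsomorphic H₀ Y₀ K₀ Y₀ ∧ ∀ i, PermIsomorphic (H i) (Y i) (K i) (Y i) := by
  have hcop' : (Nat.card Y₀).Coprime (Nat.card (∀ i, Y i)) := by
    rw [Nat.card_pi]
    exact Nat.Coprime.prod_right fun i _ => hcop₀ i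
  exact ⟨fun h => ⟨h.of_prod_fst hcop', (h.of_prod_snd hcop').of_pi hcop⟩,
    fun h => h.1.prod (pi h.2)⟩

end PermIsomorphic

theorem eq_one_of_pow_eq_one_of_coprime {G : Type*} [Group G] {x : G} {n : ℕ} (hx : x ^ n = 1)
    (hn : n.Coprime (Nat.card G)) : x = 1 := by
  simpa [hn.gcd_eq_one] using pow_gcd_eq_one.mpr ⟨hx, pow_card_eq_one'⟩

namespace MulAut

variable {ι : Type*} [DecidableEq ι] {G : ι → Type*} [∀ i, Group (G i)]
  (hcop : Pairwise fun i j => (Nat.card (G i)).Coprime (Nat.card (G j)))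
include hcop

theorem apply_mulSingle_of_coprime (α : MulAut (∀ i, G i)) (k : ι) (a : G k) :
    α (Pi.mulSingle k a) = Pi.mulSingle k (α (Pi.mulSingle k a) k) := by
  funext j
  by_cases hjk : j = k
  · subst hjk; simp
  rw [Pi.mulSingle_eq_of_ne hjk]
  refine eq_one_of_pow_eq_one_of_coprime (n := Nat.card (G k)) ?_ (hcop hjk).symm
  rw [← Pi.pow_apply, ← map_pow, ← Pi.mulSingle_pow, pow_card_eq_one', Pi.mulSingle_one,
    map_one, Pi.one_apply]

theorem apply_apply_of_coprime [Fintype ι] [∀ i, Finite (G i)] (α : MulAut (∀ i, G i))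
    (x : ∀ i, G i) (k : ι) : α x k = α (Pi.mulSingle k (x k)) k := by
  have hz : α (Function.update x k 1) k = 1 := by
    refine eq_one_of_pow_eq_one_of_coprime (n := ∏ j ∈ Finset.univ.erase k, Nat.card (G j)) ?_
      (Nat.Coprime.prod_left fun j hj => hcop (Finset.ne_of_mem_erase hj))
    suffices Function.update x k 1 ^ ∏ j ∈ Finset.univ.erase k, Nat.card (G j) = 1 by
      rw [← Pi.pow_apply, ← map_pow, this, map_one, Pi.one_apply]
    funext j
    by_cases hjk : j = k
    · subst hjk; simp
    rw [Pi.pow_apply, Function.update_of_ne hjk, Pi.one_apply]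
    exact orderOf_dvd_iff_pow_eq_one.mp ((orderOf_dvd_natCard _).trans
      (Finset.dvd_prod_of_mem _ (Finset.mem_erase.mpr ⟨hjk, Finset.mem_univ j⟩)))
  have hx : Pi.mulSingle k (x k) * Function.update x k 1 = x := by
    funext j
    by_cases hjk : j = k
    · subst hjk; simp
    · simp [hjk]
  rw [← congrArg (α · k) hx, map_mul, Pi.mul_apply, hz, mul_one]

def piComponent (α : MulAut (∀ i, G i)) (k : ι) : MulAut (G k) where
  toFun a := α (Pi.mulSingle k a) k
  invFun a := α.symm (Pi.mulSingle k a) k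
  left_inv a := by
    simp only
    rw [← apply_mulSingle_of_coprime hcop, MulEquiv.symm_apply_apply, Pi.mulSingle_eq_same]
  right_inv a := by
    simp only
    rw [← apply_mulSingle_of_coprime hcop, MulEquiv.apply_symm_apply, Pi.mulSingle_eq_same]
  map_mul' a b := by simp [Pi.mulSingle_mul]

def piEquivOfCoprime [Fintype ι] [∀ i, Finite (G i)] :
    MulAut (∀ i, G i) ≃* ∀ i, MulAut (G i) where
  toFun α k := piComponent hcop α k
  invFun := MulEquiv.piCongrRight
  left_inv α := by
    ext x k
    exact (apply_apply_of_coprime hcop α x k).symm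
  right_inv β := by
    ext k a
    simp [piComponent]
  map_mul' α β := by
    ext k a
    show α (β (Pi.mulSingle k a)) k = α (Pi.mulSingle k (β (Pi.mulSingle k a) k)) k
    rw [← apply_mulSingle_of_coprime hcop β]

end MulAut

def MulEquiv.piOptionEquivProd {ι : Type*} {β : Option ι → Type*} [∀ j, Mul (β j)] :
    (∀ j, β j) ≃* β none × ∀ i, β (some i) :=
  { Equiv.piOptionEquivProd with map_mul' := fun _ _ => rfl }

universe u

/- `A` and the `G i` as one family over `Option ι`, so that `A × ∀ i, G i` is a single
product of groups. -/

instance Option.elim.instGroup {ι : Type*} {A : Type u} [Group A] {G : ι → Type u}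
    [∀ i, Group (G i)] : ∀ j : Option ι, Group (j.elim A G)
  | none => inferInstanceAs (Group A)
  | some i => inferInstanceAs (Group (G i))

instance Option.elim.instFinite {ι : Type*} {A : Type u} [Finite A] {G : ι → Type u}
    [∀ i, Finite (G i)] : ∀ j : Option ι, Finite (j.elim A G)
  | none => inferInstanceAs (Finite A)
  | some i => inferInstanceAs (Finite (G i))

namespace Hol

def congr {N N' : Type*} [Group N] [Group N'] (e : N ≃* N') : Hol N ≃* Hol N' :=
  SemidirectProduct.congr e (MulAut.congr e) fun _ => by ext; simp

def piEquivOfCoprime {ι : Type*} [Fintype ι] [DecidableEq ι] {G : ι → Type*}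
    [∀ i, Group (G i)] [∀ i, Finite (G i)]
    (hcop : Pairwise fun i j => (Nat.card (G i)).Coprime (Nat.card (G j))) :
    Hol (∀ i, G i) ≃* ∀ i, Hol (G i) where
  toFun g i := ⟨g.left i, MulAut.piEquivOfCoprime hcop g.right i⟩
  invFun g := ⟨fun i => (g i).left, (MulAut.piEquivOfCoprime hcop).symm fun i => (g i).right⟩
  left_inv _ := SemidirectProduct.ext rfl ((MulAut.piEquivOfCoprime hcop).symm_apply_apply _)
  right_inv _ := funext fun i =>
    SemidirectProduct.ext rfl (congrFun ((MulAut.piEquivOfCoprime hcop).apply_symm_apply _) i)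
  map_mul' g h := funext fun i => SemidirectProduct.ext
    (congrArg (g.left i * ·) (MulAut.apply_apply_of_coprime hcop g.right h.left i))
    (congrFun (map_mul (MulAut.piEquivOfCoprime hcop) g.right h.right) i)

def prodPiEquivOfCoprime {ι : Type*} [Fintype ι] [DecidableEq ι] {A : Type u} [Group A]
    [Finite A] {G : ι → Type u} [∀ i, Group (G i)] [∀ i, Finite (G i)]
    (hA : ∀ i, (Nat.card A).Coprime (Nat.card (G i)))
    (hG : Pairwise fun i j => (Nat.card (G i)).Coprime (Nat.card (G j))) :
    Hol (A × ∀ i, G i) ≃* Hol A × ∀ i, Hol (G i) :=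
  have hcop : Pairwise fun j j' : Option ι =>
      (Nat.card (j.elim A G)).Coprime (Nat.card (j'.elim A G)) := by
    rintro (_ | i) (_ | i') h
    · exact absurd rfl h
    · exact hA i'
    · exact (hA i).symm
    · exact hG (Option.some_injective _ |>.ne_iff.mp h)
  (congr (MulEquiv.piOptionEquivProd (β := fun j => j.elim A G)).symm).trans
    ((piEquivOfCoprime hcop).trans (MulEquiv.piOptionEquivProd (β := fun j => Hol (j.elim A G))))

end Hol

theorem squarefree_prod_of_cunningham {l : ℕ} {p : ℕ → ℕ}
    (hprime : ∀ i, 1 ≤ i → i ≤ l → (p i).Prime)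
    (hchain : ∀ i, 1 ≤ i → i < l → p i = 2 * p (i + 1) + 1) :
    Squarefree (∏ i ∈ Finset.Icc 1 l, p i) := by
  have hanti : StrictAntiOn p (Set.Icc 1 l) :=
    strictAntiOn_of_succ_lt Set.ordConnected_Icc fun i _ hi hi' => by
      rw [Order.succ_eq_add_one] at hi' ⊢
      have := hchain i hi.1 (by have := hi'.2; omega)
      omega
  refine Finset.squarefree_prod_of_pairwise_isCoprime (fun i hi j hj hij => ?_) fun i hi => ?_
  · rw [Finset.coe_Icc] at hi hj
    exact Nat.coprime_iff_isRelPrime.mp <|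
      (Nat.coprime_primes (hprime i hi.1 hi.2) (hprime j hj.1 hj.2)).mpr (hanti.injOn.ne hi hj hij)
  · obtain ⟨h1, h2⟩ := Finset.mem_Icc.mp hi
    exact (hprime i h1 h2).prime.squarefree

theorem Finset.coprime_of_squarefree_prod {ι : Type*} [DecidableEq ι] {s : Finset ι} {f : ι → ℕ}
    (h : Squarefree (∏ i ∈ s, f i)) {i j : ι} (hi : i ∈ s) (hj : j ∈ s) (hij : i ≠ j) :
    (f i).Coprime (f j) := by
  refine Nat.coprime_of_squarefree_mul (Squarefree.squarefree_of_dvd ?_ h)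
  rw [← Finset.prod_pair hij]
  exact Finset.prod_dvd_prod_of_subset _ _ _
    (Finset.insert_subset hi (Finset.singleton_subset_iff.mpr hj))

theorem prod_transitive_perm_iso_iff_factorwise_general
    (l : ℕ) (p : ℕ → ℕ)
    (hprime : ∀ i, 1 ≤ i → i ≤ l → (p i).Prime)
    (hchain : ∀ i, 1 ≤ i → i < l → p i = 2 * p (i + 1) + 1)
    (n : ℕ) (hn : n = ∏ i ∈ Finset.Icc 1 l, p i)
    (I : Finset ℕ)
    (m : ℕ) (hm : n = m * ∏ i ∈ I, (p (i - 1) * p i))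
    (G : ℕ → Type) [∀ i, Group (G i)]
    (hGcard : ∀ i ∈ I, Nat.card (G i) = p (i - 1) * p i)
    (M₀ M₀' : Subgroup (Hol (Multiplicative (ZMod m))))
    (hM₀ : ∀ a b : Multiplicative (ZMod m), ∃ g ∈ M₀, holSmul g a = b)
    (hM₀' : ∀ a b : Multiplicative (ZMod m), ∃ g ∈ M₀', holSmul g a = b)
    (Mi Mi' : (i : I) → Subgroup (Hol (G (i : ℕ))))
    (hMi : ∀ i : I, ∀ a b : G (i : ℕ), ∃ g ∈ Mi i, holSmul g a = b)
    (hMi' : ∀ i : I, ∀ a b : G (i : ℕ), ∃ g ∈ Mi' i, holSmul g a = b) :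
    Nonempty
      (Hol (Multiplicative (ZMod m) × ((i : I) → G (i : ℕ))) ≃*
        Hol (Multiplicative (ZMod m)) × ((i : I) → Hol (G (i : ℕ)))) ∧
    ((∃ (φ : (M₀.prod (Subgroup.pi Set.univ fun i : I => Mi i)) ≃*
          (M₀'.prod (Subgroup.pi Set.univ fun i : I => Mi' i)))
        (f : (Multiplicative (ZMod m) × ((i : I) → G (i : ℕ))) ≃
          (Multiplicative (ZMod m) × ((i : I) → G (i : ℕ)))),
        ∀ (g : (M₀.prod (Subgroup.pi Set.univ fun i : I => Mi i)))
          (y : Multiplicative (ZMod m) × ((i : I) → G (i : ℕ))),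
          f (prodHolSmul (g : Hol (Multiplicative (ZMod m)) × ((i : I) → Hol (G (i : ℕ)))) y) =
            prodHolSmul ((φ g : (M₀'.prod (Subgroup.pi Set.univ fun i : I => Mi' i))) :
              Hol (Multiplicative (ZMod m)) × ((i : I) → Hol (G (i : ℕ)))) (f y)) ↔
      ((∃ (φ₀ : M₀ ≃* M₀') (f₀ : Multiplicative (ZMod m) ≃ Multiplicative (ZMod m)),
          ∀ (g : M₀) (y : Multiplicative (ZMod m)),
            f₀ (holSmul (g : Hol (Multiplicative (ZMod m))) y) =
              holSmul ((φ₀ g : M₀') : Hol (Multiplicative (ZMod m))) (f₀ y)) ∧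
        ∀ i : I, ∃ (φi : Mi i ≃* Mi' i) (fi : G (i : ℕ) ≃ G (i : ℕ)),
          ∀ (g : Mi i) (y : G (i : ℕ)),
            fi (holSmul (g : Hol (G (i : ℕ))) y) =
              holSmul ((φi g : Mi' i) : Hol (G (i : ℕ))) (fi y))) := by
  have hsq : Squarefree (m * ∏ i ∈ I, (p (i - 1) * p i)) :=
    hm ▸ hn ▸ squarefree_prod_of_cunningham hprime hchain
  have hcardG (i : I) : Nat.card (G i) = p (i - 1) * p i := hGcard i i.2
  have : NeZero m := ⟨left_ne_zero_of_mul hsq.ne_zero⟩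
  have (i : I) : Finite (G i) := Nat.finite_of_card_ne_zero <| by
    rw [hcardG]
    exact Finset.prod_ne_zero_iff.mp (right_ne_zero_of_mul hsq.ne_zero) i i.2
  have hcopA (i : I) : (Nat.card (Multiplicative (ZMod m))).Coprime (Nat.card (G i)) := by
    rw [hcardG, Nat.card_congr Multiplicative.toAdd, Nat.card_zmod]
    exact (Nat.coprime_of_squarefree_mul hsq).coprime_dvd_right
      (Finset.dvd_prod_of_mem (fun i => p (i - 1) * p i) i.2)
  have hcopG : Pairwise fun i j : I => (Nat.card (G i)).Coprime (Nat.card (G j)) :=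
    fun i j hij => by
      dsimp only
      rw [hcardG, hcardG]
      exact Finset.coprime_of_squarefree_prod hsq.of_mul_right i.2 j.2
        (Subtype.coe_injective.ne hij)
  have := Subgroup.isPretransitive_of_exists_smul_eq hM₀
  have := Subgroup.isPretransitive_of_exists_smul_eq hM₀'
  have (i : I) := Subgroup.isPretransitive_of_exists_smul_eq (hMi i)
  have (i : I) := Subgroup.isPretransitive_of_exists_smul_eq (hMi' i)
  refine ⟨⟨Hol.prodPiEquivOfCoprime hcopA hcopG⟩, ?_⟩
  -- With `holSmul` and `prodHolSmul` as the actions, both sides are `PermIsomorphic` by `rfl`.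
  exact ((PermIsomorphic.subgroup_prod_pi M₀ Mi).congr
    (PermIsomorphic.subgroup_prod_pi M₀' Mi')).trans (PermIsomorphic.prod_pi_iff hcopG hcopA)

/-- Let `n = p₁ ⋯ p_l` be a Cunningham product, `I ⊆ {2, …, l}` nonempty with no two
consecutive integers, `m = n / ∏_{i∈I} p_{i-1} pᵢ`, and
`N = C_m × ∏_{i∈I} (C_{p_{i-1}} ⋊ C_{pᵢ})`, where each `G i = C_{p_{i-1}} ⋊ C_{pᵢ}`
is the nonabelian group of order `p_{i-1} pᵢ`.  Then
`Hol(N) ≅ Hol(C_m) × ∏_{i∈I} Hol(C_{p_{i-1}} ⋊ C_{pᵢ})`; and if `M₀, M₀' ≤ Hol(C_m)`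
are transitive on `C_m` and `Mᵢ, Mᵢ' ≤ Hol(G i)` are transitive on `G i` for each
`i ∈ I`, so that `M = M₀ × ∏ᵢ Mᵢ` and `M' = M₀' × ∏ᵢ Mᵢ'` are transitive subgroups of
the product, then `M` and `M'` are isomorphic as permutation groups if and only if
`M_j` and `M_j'` are isomorphic as permutation groups for every `j ∈ {0} ∪ I`. -/
theorem prod_transitive_perm_iso_iff_factorwise
    (l : ℕ) (hl : 1 ≤ l) (p : ℕ → ℕ)
    (hprime : ∀ i, 1 ≤ i → i ≤ l → (p i).Prime)
    (hodd : ∀ i, 1 ≤ i → i ≤ l → Odd (p i))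
    (hchain : ∀ i, 1 ≤ i → i < l → p i = 2 * p (i + 1) + 1)
    (n : ℕ) (hn : n = ∏ i ∈ Finset.Icc 1 l, p i)
    (I : Finset ℕ) (hIne : I.Nonempty) (hIsub : I ⊆ Finset.Icc 2 l)
    (hIcons : ∀ i ∈ I, i + 1 ∉ I)
    (m : ℕ) (hm : n = m * ∏ i ∈ I, (p (i - 1) * p i))
    (G : ℕ → Type) [∀ i, Group (G i)]
    (hGcard : ∀ i ∈ I, Nat.card (G i) = p (i - 1) * p i)
    (hGnonab : ∀ i ∈ I, ∃ a b : G i, a * b ≠ b * a)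
    (M₀ M₀' : Subgroup (Hol (Multiplicative (ZMod m))))
    (hM₀ : ∀ a b : Multiplicative (ZMod m), ∃ g ∈ M₀, holSmul g a = b)
    (hM₀' : ∀ a b : Multiplicative (ZMod m), ∃ g ∈ M₀', holSmul g a = b)
    (Mi Mi' : (i : I) → Subgroup (Hol (G (i : ℕ))))
    (hMi : ∀ i : I, ∀ a b : G (i : ℕ), ∃ g ∈ Mi i, holSmul g a = b)
    (hMi' : ∀ i : I, ∀ a b : G (i : ℕ), ∃ g ∈ Mi' i, holSmul g a = b) :
    Nonempty
      (Hol (Multiplicative (ZMod m) × ((i : I) → G (i : ℕ))) ≃*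
        Hol (Multiplicative (ZMod m)) × ((i : I) → Hol (G (i : ℕ)))) ∧
    ((∃ (φ : (M₀.prod (Subgroup.pi Set.univ fun i : I => Mi i)) ≃*
          (M₀'.prod (Subgroup.pi Set.univ fun i : I => Mi' i)))
        (f : (Multiplicative (ZMod m) × ((i : I) → G (i : ℕ))) ≃
          (Multiplicative (ZMod m) × ((i : I) → G (i : ℕ)))),
        ∀ (g : (M₀.prod (Subgroup.pi Set.univ fun i : I => Mi i)))
          (y : Multiplicative (ZMod m) × ((i : I) → G (i : ℕ))),
          f (prodHolSmul (g : Hol (Multiplicative (ZMod m)) × ((i : I) → Hol (G (i : ℕ)))) y) =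
            prodHolSmul ((φ g : (M₀'.prod (Subgroup.pi Set.univ fun i : I => Mi' i))) :
              Hol (Multiplicative (ZMod m)) × ((i : I) → Hol (G (i : ℕ)))) (f y)) ↔
      ((∃ (φ₀ : M₀ ≃* M₀') (f₀ : Multiplicative (ZMod m) ≃ Multiplicative (ZMod m)),
          ∀ (g : M₀) (y : Multiplicative (ZMod m)),
            f₀ (holSmul (g : Hol (Multiplicative (ZMod m))) y) =
              holSmul ((φ₀ g : M₀') : Hol (Multiplicative (ZMod m))) (f₀ y)) ∧
        ∀ i : I, ∃ (φi : Mi i ≃* Mi' i) (fi : G (i : ℕ) ≃ G (i : ℕ)),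
          ∀ (g : Mi i) (y : G (i : ℕ)),
            fi (holSmul (g : Hol (G (i : ℕ))) y) =
              holSmul ((φi g : Mi' i) : Hol (G (i : ℕ))) (fi y))) :=
  prod_transitive_perm_iso_iff_factorwise_general l p hprime hchain n hn I m hm G hGcard M₀ M₀' hM₀
    hM₀' Mi Mi' hMi hMi'
end
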